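/- arXiv:2501.19214 — 3 statements merged into one kernel-verified Lean document; each statement's English description precedes it below -/
import Mathlib

section
/- If g : ℝ^d → ℝ is ρ-weakly convex on a convex set X (i.e., x ↦ g(x) + (ρ/2)‖x‖² is convex on X), then for any ν > 0 the composition x ↦ H^ν(g(x)) is ρ-weakly convex on X, where H^ν is the Huber smoothing function. -/
noncomputable def huber (ν z : ℝ) : ℝ :=
  if z < 0 then 0 else if z ≤ ν then z^2 / (2*ν) else z - ν/2

/-! The Huber function is the attained maximum `huber ν z = max_{t ∈ [0,1]} (t z - ν t² / 2)`,
and `t g + ρ‖·‖²/2 = t (g + ρ‖·‖²/2) + (1 - t) ρ‖·‖²/2` is convex for each such `t` when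
`g + ρ‖·‖²/2` is. So `huber ν ∘ g + ρ‖·‖²/2` is a pointwise attained maximum of convex
functions, hence convex. -/

theorem convexOn_of_le_of_exists_eq {𝕜 E β ι : Type*} [Semiring 𝕜] [PartialOrder 𝕜]
    [AddCommMonoid E] [SMul 𝕜 E] [AddCommMonoid β] [PartialOrder β] [IsOrderedAddMonoid β]
    [SMul 𝕜 β] [PosSMulMono 𝕜 β] {s : Set E} {F : E → β}
    (hs : Convex 𝕜 s) (f : ι → E → β) (hf : ∀ i, ConvexOn 𝕜 s (f i)) (hle : ∀ i, ∀ x ∈ s, f i x ≤ F x)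
    (hF : ∀ x ∈ s, ∃ i, F x = f i x) : ConvexOn 𝕜 s F := by
  refine ⟨hs, fun x hx y hy a b ha hb hab => ?_⟩
  obtain ⟨i, hi⟩ := hF _ (hs hx hy ha hb hab)
  calc F (a • x + b • y) = f i (a • x + b • y) := hi
    _ ≤ a • f i x + b • f i y := (hf i).2 hx hy ha hb hab
    _ ≤ a • F x + b • F y := by
      gcongr
      exacts [hle i x hx, hle i y hy]

theorem mul_sub_sq_le_huber {ν : ℝ} (hν : 0 ≤ ν) (z : ℝ) {t : ℝ} (ht₀ : 0 ≤ t) (ht₁ : t ≤ 1) :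
    t * z - ν / 2 * t ^ 2 ≤ huber ν z := by
  unfold huber
  split_ifs with hz hzν
  · nlinarith
  · rcases hν.eq_or_lt with rfl | hν
    · obtain rfl : z = 0 := by linarith
      simp
    rw [le_div_iff₀ (by positivity)]
    nlinarith [sq_nonneg (z - ν * t)]
  · nlinarith [mul_nonneg (sub_nonneg.2 ht₁) (by nlinarith : 0 ≤ 2 * z - ν * (1 + t))]

theorem exists_huber_eq_mul_sub_sq {ν : ℝ} (hν : 0 ≤ ν) (z : ℝ) :
    ∃ t, 0 ≤ t ∧ t ≤ 1 ∧ huber ν z = t * z - ν / 2 * t ^ 2 := by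
  unfold huber
  split_ifs with hz hzν
  · exact ⟨0, le_rfl, zero_le_one, by ring⟩
  · refine ⟨z / ν, div_nonneg (not_lt.1 hz) hν, div_le_one_of_le₀ hzν hν, ?_⟩
    rcases hν.eq_or_lt with rfl | hν
    · simp
    field_simp
    ring
  · exact ⟨1, zero_le_one, le_rfl, by ring⟩

theorem ConvexOn.mul_add_half_mul_norm_sq {E : Type*} [SeminormedAddCommGroup E]
    [NormedSpace ℝ E] {s : Set E} {g : E → ℝ} {ρ t : ℝ} (hρ : 0 ≤ ρ) (ht₀ : 0 ≤ t) (ht₁ : t ≤ 1)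
    (hg : ConvexOn ℝ s (fun x => g x + ρ / 2 * ‖x‖ ^ 2)) :
    ConvexOn ℝ s (fun x => t * g x + ρ / 2 * ‖x‖ ^ 2) := by
  have hsq : ConvexOn ℝ s (fun x => ‖x‖ ^ 2) :=
    (convexOn_norm hg.1).pow (fun x _ => norm_nonneg x) 2
  refine ((hg.smul ht₀).add (hsq.smul (by positivity : 0 ≤ (1 - t) * (ρ / 2)))).congr ?_
  intro x _
  simp only [Pi.add_apply, smul_eq_mul]
  ring

theorem huber_comp_weakly_convex {d : ℕ}
    (X : Set (EuclideanSpace ℝ (Fin d))) (g : EuclideanSpace ℝ (Fin d) → ℝ)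
    (ρ ν : ℝ) (hρ : 0 ≤ ρ) (hν : 0 < ν)
    (hg : ConvexOn ℝ X (fun x => g x + ρ/2 * ‖x‖^2)) :
    ConvexOn ℝ X (fun x => huber ν (g x) + ρ/2 * ‖x‖^2) := by
  refine convexOn_of_le_of_exists_eq (ι := Set.Icc (0 : ℝ) 1) hg.1
    (fun t x => t * g x + ρ / 2 * ‖x‖ ^ 2 - ν / 2 * t ^ 2)
    (fun t => (hg.mul_add_half_mul_norm_sq hρ t.2.1 t.2.2).add_const _)
    (fun t x _ => ?_) (fun x _ => ?_)
  · linarith [mul_sub_sq_le_huber hν.le (g x) t.2.1 t.2.2]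
  · obtain ⟨t, ht₀, ht₁, ht⟩ := exists_huber_eq_mul_sub_sq hν.le (g x)
    exact ⟨⟨t, ht₀, ht₁⟩, by simp only [ht]; ring⟩
end

section
/- Let f be ρ_f-weakly convex on X and g₁,…,g_m each be ρ_g-weakly convex on X, and let β > 0, ν > 0. Then F^ν(x) = f(x) + β·Σ_{i=1}^m H^ν(g_i(x)) is (ρ_f + β·m·ρ_g)-weakly convex on X. -/
lemma huber_mono {ν : ℝ} (hν : 0 < ν) {s t : ℝ} (hst : s ≤ t) :
    huber ν s ≤ huber ν t := by
  have h2ν : (0:ℝ) < 2*ν := by linarith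
  unfold huber
  split_ifs <;>
    nlinarith [div_mul_cancel₀ (s^2) (ne_of_gt h2ν), div_mul_cancel₀ (t^2) (ne_of_gt h2ν),
      sq_nonneg s, sq_nonneg t, sq_nonneg (s - t), sq_nonneg (t - ν), sq_nonneg (s - ν),
      mul_pos hν hν]

lemma huber_lip {ν : ℝ} (hν : 0 < ν) {s t : ℝ} (hst : s ≤ t) :
    huber ν t ≤ huber ν s + (t - s) := by
  have h2ν : (0:ℝ) < 2*ν := by linarith
  unfold huber
  split_ifs <;>
    nlinarith [div_mul_cancel₀ (s^2) (ne_of_gt h2ν), div_mul_cancel₀ (t^2) (ne_of_gt h2ν),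
      sq_nonneg s, sq_nonneg t, sq_nonneg (s - t), sq_nonneg (t - ν), sq_nonneg (s - ν),
      mul_pos hν hν]

lemma huber_affine_le {ν : ℝ} (hν : 0 < ν) {s : ℝ} (hs0 : 0 ≤ s) (hsν : s ≤ ν) (t : ℝ) :
    s*t/ν - s^2/(2*ν) ≤ huber ν t := by
  have h2ν : (0:ℝ) < 2*ν := by linarith
  have c1 := div_mul_cancel₀ (s*t) (ne_of_gt hν)
  have c2 := div_mul_cancel₀ (s^2) (ne_of_gt h2ν)
  have c3 := div_mul_cancel₀ (t^2) (ne_of_gt h2ν)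
  unfold huber
  split_ifs with h1 h2
  · nlinarith [mul_nonpos_of_nonneg_of_nonpos hs0 h1.le, sq_nonneg s]
  · nlinarith [sq_nonneg (s - t)]
  · have ht : ν < t := not_le.1 h2
    nlinarith [mul_nonneg (sub_nonneg.2 hsν) (by linarith : (0:ℝ) ≤ 2*t - ν - s)]

lemma huber_comb {ν : ℝ} (hν : 0 < ν) {a b u v : ℝ} (ha : 0 ≤ a) (hb : 0 ≤ b)
    (hab : a + b = 1) : huber ν (a*u + b*v) ≤ a * huber ν u + b * huber ν v := by
  set w := a*u + b*v with hw
  set s := max 0 (min w ν) with hs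
  have hs0 : 0 ≤ s := le_max_left _ _
  have hsν : s ≤ ν := max_le hν.le (min_le_right _ _)
  have key : huber ν w = s*w/ν - s^2/(2*ν) := by
    unfold huber
    split_ifs with h1 h2
    · have : s = 0 := by
        rw [hs, max_eq_left ((min_le_left w ν).trans h1.le)]
      rw [this]; ring
    · have : s = w := by
        rw [hs, min_eq_left h2, max_eq_right (not_lt.1 h1)]
      rw [this]; field_simp; ring
    · have : s = ν := by
        rw [hs, min_eq_right (le_of_lt (not_le.1 h2)), max_eq_right hν.le]
      rw [this]; field_simp
  have hu := huber_affine_le hν hs0 hsν u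
  have hv := huber_affine_le hν hs0 hsν v
  have h1 := mul_le_mul_of_nonneg_left hu ha
  have h2 := mul_le_mul_of_nonneg_left hv hb
  have hb' : b = 1 - a := by linarith
  have hsum : a * (s*u/ν - s^2/(2*ν)) + b * (s*v/ν - s^2/(2*ν)) = s*w/ν - s^2/(2*ν) := by
    rw [hw, hb']; field_simp; ring
  rw [key, ← hsum]
  linarith

theorem penalty_weakly_convex {d m : ℕ}
    (X : Set (EuclideanSpace ℝ (Fin d)))
    (f : EuclideanSpace ℝ (Fin d) → ℝ) (g : Fin m → EuclideanSpace ℝ (Fin d) → ℝ)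
    (ρf ρg β ν : ℝ) (hρf : 0 ≤ ρf) (hρg : 0 ≤ ρg) (hβ : 0 < β) (hν : 0 < ν)
    (hf : ConvexOn ℝ X (fun x => f x + ρf/2 * ‖x‖^2))
    (hg : ∀ i, ConvexOn ℝ X (fun x => g i x + ρg/2 * ‖x‖^2)) :
    ConvexOn ℝ X
      (fun x => (f x + β * ∑ i, huber ν (g i x)) + (ρf + β * m * ρg)/2 * ‖x‖^2) := by
  refine ⟨hf.1, fun x hx y hy a b ha hb hab => ?_⟩
  simp only [smul_eq_mul]
  set z := a • x + b • y with hz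
  -- norm squared convexity
  have hnz : ‖z‖ ≤ a * ‖x‖ + b * ‖y‖ := by
    calc ‖z‖ ≤ ‖a • x‖ + ‖b • y‖ := norm_add_le _ _
    _ = a * ‖x‖ + b * ‖y‖ := by
        rw [norm_smul, norm_smul, Real.norm_of_nonneg ha, Real.norm_of_nonneg hb]
  have hD : ‖z‖^2 ≤ a * ‖x‖^2 + b * ‖y‖^2 := by
    have h0 : (0:ℝ) ≤ ‖z‖ := norm_nonneg _
    nlinarith [sq_nonneg (‖x‖ - ‖y‖), mul_nonneg ha hb, norm_nonneg x, norm_nonneg y]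
  set D := a * ‖x‖^2 + b * ‖y‖^2 - ‖z‖^2 with hDdef
  have hD0 : 0 ≤ D := by simp only [hDdef]; linarith
  -- f part
  have hfpart : f z + ρf/2 * ‖z‖^2 ≤ a * (f x + ρf/2 * ‖x‖^2) + b * (f y + ρf/2 * ‖y‖^2) := by
    have := hf.2 hx hy ha hb hab
    simpa only [smul_eq_mul] using this
  -- per-i huber part
  have hpart : ∀ i, huber ν (g i z) ≤
      a * huber ν (g i x) + b * huber ν (g i y) + ρg/2 * D := by
    intro i
    have hgi : g i z + ρg/2 * ‖z‖^2 ≤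
        a * (g i x + ρg/2 * ‖x‖^2) + b * (g i y + ρg/2 * ‖y‖^2) := by
      have := (hg i).2 hx hy ha hb hab
      simpa only [smul_eq_mul] using this
    have hle : g i z ≤ a * g i x + b * g i y + ρg/2 * D := by
      simp only [hDdef]; nlinarith
    calc huber ν (g i z) ≤ huber ν (a * g i x + b * g i y + ρg/2 * D) := huber_mono hν hle
    _ ≤ huber ν (a * g i x + b * g i y) + ρg/2 * D := by
        have := huber_lip hν (s := a * g i x + b * g i y)
          (t := a * g i x + b * g i y + ρg/2 * D) (by nlinarith [mul_nonneg hρg hD0])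
        linarith
    _ ≤ a * huber ν (g i x) + b * huber ν (g i y) + ρg/2 * D := by
        linarith [huber_comb hν ha hb hab (u := g i x) (v := g i y)]
  -- sum the huber parts
  have hsum : ∑ i, huber ν (g i z) ≤
      a * ∑ i, huber ν (g i x) + b * ∑ i, huber ν (g i y) + m * (ρg/2 * D) := by
    calc ∑ i, huber ν (g i z)
        ≤ ∑ i, (a * huber ν (g i x) + b * huber ν (g i y) + ρg/2 * D) :=
          Finset.sum_le_sum fun i _ => hpart i
    _ = a * ∑ i, huber ν (g i x) + b * ∑ i, huber ν (g i y) + m * (ρg/2 * D) := by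
        rw [Finset.sum_add_distrib, Finset.sum_add_distrib, ← Finset.mul_sum, ← Finset.mul_sum]
        simp [Finset.card_univ]
  have hβsum := mul_le_mul_of_nonneg_left hsum hβ.le
  -- combine everything
  simp only [hDdef] at hβsum
  nlinarith [hβsum, hfpart]
end

section
/- For g(x) = −6 + 8x + x² − x³ on X = [0,1]: (a) with y = 0.01, the inequality g(y) + (5/2)(x − y)² ≤ −3 holds for all x ∈ [0,1] (so the Slater-type CQ holds with B = 3, ρ̄ = 5 > 4 = ρ_g); and (b) min_{x ∈ [0,1]} g(x) = −6 > −8 = −2·ρ_g·D² with ρ_g = 4 and D = 1, so strong feasibility fails. -/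
/-! Both parts are crude estimates on `[0,1]`: for (a), `(x - y)² ≤ D² = 1` and
`g(0.01) < -5.5`, so the left side is at most `-5.5 + 5/2 = -3`; for (b),
`x³ ≤ x²` gives `g(x) ≥ -6 + 8x ≥ -6`, with equality at `x = 0`. -/

theorem sq_sub_le_sq_of_mem_Icc {a b x y : ℝ} (hx : x ∈ Set.Icc a b) (hy : y ∈ Set.Icc a b) :
    (x - y) ^ 2 ≤ (b - a) ^ 2 := by
  rw [← sq_abs, ← Real.dist_eq]
  exact pow_le_pow_left₀ dist_nonneg (Real.dist_le_of_mem_Icc hx hy) 2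

theorem example_cq_but_not_strong_feasibility :
    (∀ x ∈ Set.Icc (0:ℝ) 1,
        (-6 + 8*(0.01:ℝ) + (0.01:ℝ)^2 - (0.01:ℝ)^3) + (5/2) * (x - 0.01)^2 ≤ -3) ∧
    (∀ x ∈ Set.Icc (0:ℝ) 1, (-6:ℝ) ≤ -6 + 8*x + x^2 - x^3) ∧
    ((-6:ℝ) + 8*0 + (0:ℝ)^2 - (0:ℝ)^3 = -6) ∧
    ((-6:ℝ) > -8) ∧ ((-8:ℝ) = -2 * 4 * 1^2) := by
  refine ⟨fun x hx => ?_, fun x ⟨hx0, hx1⟩ => ?_, by norm_num, by norm_num, by norm_num⟩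
  · have hdist : (x - 0.01) ^ 2 ≤ (1 - 0) ^ 2 :=
      sq_sub_le_sq_of_mem_Icc hx ⟨by norm_num, by norm_num⟩
    linarith
  · have hcube : x ^ 3 ≤ x ^ 2 := pow_le_pow_of_le_one hx0 hx1 (by norm_num)
    linarith
end
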